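/- arXiv:1807.11732 — 3 statements merged into one kernel-verified Lean document; each statement's English description precedes it below -/
import Mathlib

section
/- For k ≥ 0, the neighborhood complex of S_{3,k} decomposes as the disjoint union of: the face poset of the neighborhood complex of SG_{3,k}; the sets A_k^{s,t} for s ∈ [k+6], t ∈ [k+6] \ {s-1,s,s+1}; the sets B_k^{s,u} for s ∈ [k+4], u ∈ J_s; and the set C_k of simplices containing an unstable vertex. -/
open Finset

namespace KG

/-- The ground set `[k+6] = {1, …, k+6}`. -/
def ground (k : ℕ) : Finset ℕ := Finset.Icc 1 (k + 6)

/-- Cyclic shift of an element of `[k+6]` by `j` (mod `k+6`), with representatives in `[k+6]`. -/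
def shiftElem (k j x : ℕ) : ℕ := (x - 1 + j) % (k + 6) + 1

/-- `σ ⊕ j`: shift every element by `j` modulo `k+6`. -/
def shift (k j : ℕ) (α : Finset ℕ) : Finset ℕ := α.image (shiftElem k j)

/-- A vertex of `KG_{3,k}`: a 3-element subset of `[k+6]`. -/
def IsVertex (k : ℕ) (α : Finset ℕ) : Prop := α ⊆ ground k ∧ α.card = 3

/-- A set is stable if it contains no two cyclically consecutive elements mod `k+6`. -/
def Stable (k : ℕ) (α : Finset ℕ) : Prop := ∀ t ∈ α, shiftElem k 1 t ∉ α

/-- Adjacency in the Kneser graph `KG_{3,k}`: disjoint 3-subsets of `[k+6]`. -/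
def AdjKG (k : ℕ) (α β : Finset ℕ) : Prop := IsVertex k α ∧ IsVertex k β ∧ Disjoint α β

/-- Adjacency in `S_{3,k}`: adjacency in `KG_{3,k}` with at least one stable endpoint. -/
def AdjS (k : ℕ) (α β : Finset ℕ) : Prop := AdjKG k α β ∧ (Stable k α ∨ Stable k β)

/-- A simplex of the neighborhood complex `N(KG_{3,k})`. -/
def SimplexKG (k : ℕ) (σ : Finset (Finset ℕ)) : Prop :=
  σ.Nonempty ∧ ∃ u, ∀ v ∈ σ, AdjKG k u v

/-- A simplex of the neighborhood complex `N(S_{3,k})`. -/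
def SimplexS (k : ℕ) (σ : Finset (Finset ℕ)) : Prop :=
  σ.Nonempty ∧ ∃ u, ∀ v ∈ σ, AdjS k u v

/-- A simplex of the neighborhood complex `N(SG_{3,k})` of the stable Kneser graph. -/
def SimplexSG (k : ℕ) (σ : Finset (Finset ℕ)) : Prop :=
  σ.Nonempty ∧ (∀ v ∈ σ, Stable k v) ∧ ∃ u, Stable k u ∧ ∀ v ∈ σ, AdjKG k u v

/-- `C_σ = [k+6] \ ⋃ σ`. -/
def Csets (k : ℕ) (σ : Finset (Finset ℕ)) : Finset ℕ := ground k \ σ.sup id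

/-- Lexicographic (strict) order on finsets of naturals via their sorted lists. -/
def lexLt (a b : Finset ℕ) : Prop :=
  List.Lex (· < ·) (a.sort (· ≤ ·)) (b.sort (· ≤ ·))

/-- The index set `J_s`. -/
def Jset (k s : ℕ) : Finset ℕ :=
  if s = 1 then Finset.Icc 3 (k + 5)
  else if 1 < s ∧ s < k + 5 then Finset.Icc (s + 2) (k + 6)
  else ∅

end KG

namespace KG

/-- `σ ∈ ⊔_{s,t} A_k^{s,t}` : `C_σ = {s, s+1, t}` with `s ∈ [k+6]`, `t ∈ I_s`. -/
def InA (k : ℕ) (σ : Finset (Finset ℕ)) : Prop :=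
  ∃ s ∈ ground k, ∃ t ∈ ground k, t ≠ shiftElem k (k + 5) s ∧ t ≠ s ∧ t ≠ shiftElem k 1 s ∧
    Csets k σ = {s, shiftElem k 1 s, t}

/-- `σ ∈ ⊔_{s,u} B_k^{s,u}` : `C_σ = {s, s+1, u, u+1}` with `s ∈ [k+4]`, `u ∈ J_s`. -/
def InB (k : ℕ) (σ : Finset (Finset ℕ)) : Prop :=
  ∃ s ∈ Finset.Icc 1 (k + 4), ∃ u ∈ Jset k s,
    Csets k σ = {s, shiftElem k 1 s, u, shiftElem k 1 u}

/-- `σ ∈ C_k` : `σ` contains an unstable vertex. -/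
def InC (k : ℕ) (σ : Finset (Finset ℕ)) : Prop := ∃ v ∈ σ, ¬ Stable k v

end KG
namespace KG
section
variable {k : ℕ}

lemma mem_ground {x : ℕ} : x ∈ ground k ↔ 1 ≤ x ∧ x ≤ k + 6 := by
  simp [ground]

lemma shiftElem_mem_ground (k j x : ℕ) : shiftElem k j x ∈ ground k := by
  have : (x - 1 + j) % (k + 6) < k + 6 := Nat.mod_lt _ (by omega)
  simp only [mem_ground, shiftElem]; omega

lemma E_shift {x : ℕ} (hx : 1 ≤ x) (j : ℕ) :
    ((shiftElem k j x : ℕ) : ZMod (k+6)) = (x : ZMod (k+6)) + (j : ZMod (k+6)) := by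
  unfold shiftElem
  push_cast [ZMod.natCast_mod]
  have h : x = (x - 1) + 1 := by omega
  rw [h]; push_cast; ring

lemma E_inj {x y : ℕ} (hx : x ∈ ground k) (hy : y ∈ ground k)
    (h : (x : ZMod (k+6)) = (y : ZMod (k+6))) : x = y := by
  rw [ZMod.natCast_eq_natCast_iff'] at h
  rw [mem_ground] at hx hy
  rcases Nat.lt_or_ge x (k+6) with hx' | hx' <;> rcases Nat.lt_or_ge y (k+6) with hy' | hy'
  · rwa [Nat.mod_eq_of_lt hx', Nat.mod_eq_of_lt hy'] at h
  · have : y = k + 6 := by omega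
    rw [Nat.mod_eq_of_lt hx', this, Nat.mod_self] at h; omega
  · have : x = k + 6 := by omega
    rw [Nat.mod_eq_of_lt hy', this, Nat.mod_self] at h; omega
  · omega

lemma natCast_ne_zero {m : ℕ} (h1 : 0 < m) (h2 : m < k + 6) :
    ((m : ℕ) : ZMod (k+6)) ≠ 0 := by
  rw [Ne, ZMod.natCast_eq_zero_iff]
  intro h
  exact absurd (Nat.le_of_dvd h1 h) (by omega)

lemma E1 {a b : ℕ} (ha : a ∈ ground k) (h : shiftElem k 1 a = b) :
    (b : ZMod (k+6)) = (a : ZMod (k+6)) + 1 := by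
  subst h
  rw [E_shift (mem_ground.mp ha).1 1, Nat.cast_one]

lemma succ_ne_self {x : ℕ} (hx : x ∈ ground k) : shiftElem k 1 x ≠ x := by
  intro h
  have h2 := E1 hx rfl
  rw [h] at h2
  refine natCast_ne_zero (k := k) (m := 1) one_pos (by omega) ?_
  push_cast
  linear_combination -h2

lemma succ_inj {a b : ℕ} (ha : a ∈ ground k) (hb : b ∈ ground k)
    (h : shiftElem k 1 a = shiftElem k 1 b) : a = b := by
  have h1 := E1 ha rfl
  have h2 := E1 hb rfl
  rw [h] at h1
  exact E_inj ha hb (by linear_combination h2 - h1)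

lemma shift1_eq {x : ℕ} (hx : x ∈ ground k) :
    shiftElem k 1 x = if x = k + 6 then 1 else x + 1 := by
  rw [mem_ground] at hx
  unfold shiftElem
  split
  · rename_i h; subst h
    have : k + 6 - 1 + 1 = k + 6 := by omega
    rw [this, Nat.mod_self]
  · have h1 : x - 1 + 1 = x := by omega
    rw [h1, Nat.mod_eq_of_lt (by omega)]

lemma triple {a b c : ℕ} (ha : a ∈ ground k) (hb : b ∈ ground k) (hc : c ∈ ground k)
    (h : ¬ Stable k {a, b, c}) :
    shiftElem k 1 a = b ∨ shiftElem k 1 a = c ∨ shiftElem k 1 b = a ∨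
      shiftElem k 1 b = c ∨ shiftElem k 1 c = a ∨ shiftElem k 1 c = b := by
  unfold Stable at h
  push_neg at h
  obtain ⟨t, ht, ht'⟩ := h
  simp only [Finset.mem_insert, Finset.mem_singleton] at ht ht'
  rcases ht with rfl | rfl | rfl <;> rcases ht' with h' | h' | h' <;>
    first
      | (exact absurd h' (succ_ne_self ‹_›))
      | tauto

lemma H3 {C : Finset ℕ} (hg : C ⊆ ground k)
    (H : ∀ w ⊆ C, w.card = 3 → ¬ Stable k w)
    {a b c : ℕ} (ha : a ∈ C) (hb : b ∈ C) (hc : c ∈ C)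
    (hab : a ≠ b) (hac : a ≠ c) (hbc : b ≠ c) :
    shiftElem k 1 a = b ∨ shiftElem k 1 a = c ∨ shiftElem k 1 b = a ∨
      shiftElem k 1 b = c ∨ shiftElem k 1 c = a ∨ shiftElem k 1 c = b := by
  refine triple (hg ha) (hg hb) (hg hc) (H _ ?_ ?_)
  · simp [Finset.insert_subset_iff, ha, hb, hc]
  · rw [Finset.card_insert_of_notMem (by simp [hab, hac]),
      Finset.card_insert_of_notMem (by simp [hbc]), Finset.card_singleton]

end
end KG
namespace KG
section
variable {k : ℕ}

lemma L1 {C : Finset ℕ} (hg : C ⊆ ground k)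
    (H : ∀ w ⊆ C, w.card = 3 → ¬ Stable k w)
    {s0 x y : ℕ} (hs0 : s0 ∈ C) (hs1 : shiftElem k 1 s0 ∈ C)
    (hx : x ∈ C) (hy : y ∈ C) (hxy : x ≠ y)
    (hxs0 : x ≠ s0) (hxs1 : x ≠ shiftElem k 1 s0)
    (hys0 : y ≠ s0) (hys1 : y ≠ shiftElem k 1 s0) :
    (shiftElem k 1 x = y ∨ shiftElem k 1 y = x) ∨
    (shiftElem k 1 x = s0 ∧ shiftElem k 1 (shiftElem k 1 s0) = y) ∨
    (shiftElem k 1 y = s0 ∧ shiftElem k 1 (shiftElem k 1 s0) = x) := by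
  have hs0g := hg hs0
  have hs1g := hg hs1
  have hxg := hg hx
  have hyg := hg hy
  have es1 : ((shiftElem k 1 s0 : ℕ) : ZMod (k+6)) = (s0 : ZMod (k+6)) + 1 := E1 hs0g rfl
  have T1 := H3 hg H hs0 hx hy (Ne.symm hxs0) (Ne.symm hys0) hxy
  have T2 := H3 hg H hs1 hx hy (Ne.symm hxs1) (Ne.symm hys1) hxy
  rcases T1 with h|h|h1|h|h1|h
  · exact absurd h.symm hxs1
  · exact absurd h.symm hys1
  all_goals try (exact Or.inl (Or.inl h))
  all_goals try (exact Or.inl (Or.inr h))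
  -- h1 : succ x = s0   or   succ y = s0
  all_goals rcases T2 with h2|h2|h2|h2|h2|h2
  -- case h1 : succ x = s0
  · -- h2 : succ s1 = x : contradiction via 3 = 0
    exfalso
    have e1 := E1 hxg h1
    have e2 := E1 hs1g h2
    refine natCast_ne_zero (k := k) (m := 3) (by omega) (by omega) ?_
    push_cast
    linear_combination -e1 - e2 - es1
  · exact Or.inr (Or.inl ⟨h1, h2⟩)
  · exact absurd (succ_inj hxg hs0g h2) hxs0
  · exact Or.inl (Or.inl h2)
  · exact absurd (succ_inj hyg hs0g h2) hys0
  · exact Or.inl (Or.inr h2)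
  -- case h1 : succ y = s0
  · exact Or.inr (Or.inr ⟨h1, h2⟩)
  · exfalso
    have e1 := E1 hyg h1
    have e2 := E1 hs1g h2
    refine natCast_ne_zero (k := k) (m := 3) (by omega) (by omega) ?_
    push_cast
    linear_combination -e1 - e2 - es1
  · exact absurd (succ_inj hxg hs0g h2) hxs0
  · exact Or.inl (Or.inl h2)
  · exact absurd (succ_inj hyg hs0g h2) hys0
  · exact Or.inl (Or.inr h2)

lemma core5 {C : Finset ℕ} (hg : C ⊆ ground k)
    (H : ∀ w ⊆ C, w.card = 3 → ¬ Stable k w)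
    {s0 z p q : ℕ}
    (hs0 : s0 ∈ C) (hs1C : shiftElem k 1 s0 ∈ C) (hp : p ∈ C) (hq : q ∈ C)
    (hzs0 : z ≠ s0) (hzs1 : z ≠ shiftElem k 1 s0)
    (hps0 : p ≠ s0) (hps1 : p ≠ shiftElem k 1 s0)
    (hqs0 : q ≠ s0) (hqs1 : q ≠ shiftElem k 1 s0)
    (hzp : z ≠ p) (hzq : z ≠ q) (hpq : p ≠ q)
    (hzp1 : shiftElem k 1 z = p) (hqz1 : shiftElem k 1 q = z) : False := by
  have hs0g := hg hs0
  have hs1g : shiftElem k 1 s0 ∈ ground k := shiftElem_mem_ground k 1 s0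
  have hpg := hg hp
  have hqg := hg hq
  have hzg : z ∈ ground k := by
    rw [← hqz1]; exact shiftElem_mem_ground k 1 q
  have es1 : ((shiftElem k 1 s0 : ℕ) : ZMod (k+6)) = (s0 : ZMod (k+6)) + 1 := E1 hs0g rfl
  have ep : (p : ZMod (k+6)) = (z : ZMod (k+6)) + 1 := E1 hzg hzp1
  have ez : (z : ZMod (k+6)) = (q : ZMod (k+6)) + 1 := E1 hqg hqz1
  have T1 := H3 hg H hs0 hp hq (Ne.symm hps0) (Ne.symm hqs0) hpq
  have K1 : (s0 : ZMod (k+6)) = (z : ZMod (k+6)) + 2 := by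
    rcases T1 with h|h|h|h|h|h
    · exact absurd h.symm hps1
    · exact absurd h.symm hqs1
    · have e1 := E1 hpg h
      linear_combination e1 + ep
    · exfalso
      have e1 := E1 hpg h
      refine natCast_ne_zero (k := k) (m := 3) (by omega) (by omega) ?_
      push_cast
      linear_combination -e1 - ep - ez
    · exact absurd (hqz1.symm.trans h) hzs0
    · exact absurd (hqz1.symm.trans h) hzp
  have T2 := H3 hg H hs1C hp hq (Ne.symm hps1) (Ne.symm hqs1) hpq
  rcases T2 with h|h|h|h|h|h
  · -- succ s1 = p : p = s0+2 and p = z+1, K1 : s0 = z+2  →  3 = 0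
    have e1 := E1 hs1g h
    refine natCast_ne_zero (k := k) (m := 3) (by omega) (by omega) ?_
    push_cast
    linear_combination ep - e1 - es1 - K1
  · -- succ s1 = q : q = s0+2, with ez, K1 : 5 = 0
    have e1 := E1 hs1g h
    refine natCast_ne_zero (k := k) (m := 5) (by omega) (by omega) ?_
    push_cast
    linear_combination -e1 - es1 - K1 - ez
  · -- succ p = s1 : s1 = p+1 = z+2 = s0  →  contradiction s1 = s0 impossible (1 = 0)
    have e1 := E1 hpg h
    refine natCast_ne_zero (k := k) (m := 1) (by omega) (by omega) ?_
    push_cast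
    linear_combination e1 + ep - es1 - K1
  · -- succ p = q : 3 = 0
    have e1 := E1 hpg h
    refine natCast_ne_zero (k := k) (m := 3) (by omega) (by omega) ?_
    push_cast
    linear_combination -e1 - ep - ez
  · -- succ q = s1 : z = s1
    exact absurd (hqz1.symm.trans h) hzs1
  · -- succ q = p : z = p
    exact absurd (hqz1.symm.trans h) hzp

end
end KG
namespace KG
section
variable {k : ℕ}

lemma core4 {C : Finset ℕ} (hg : C ⊆ ground k)
    (H : ∀ w ⊆ C, w.card = 3 → ¬ Stable k w)
    {s0 g o1 o2 : ℕ}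
    (hs0 : s0 ∈ C) (hs1C : shiftElem k 1 s0 ∈ C)
    (hgC : g ∈ C) (ho1 : o1 ∈ C) (ho2 : o2 ∈ C)
    (hgs0 : g ≠ s0) (hgs1 : g ≠ shiftElem k 1 s0)
    (h1s0 : o1 ≠ s0) (h1s1 : o1 ≠ shiftElem k 1 s0)
    (h2s0 : o2 ≠ s0) (h2s1 : o2 ≠ shiftElem k 1 s0)
    (hg1 : g ≠ o1) (hg2 : g ≠ o2) (h12 : o1 ≠ o2)
    (hgood1 : shiftElem k 1 g ≠ s0) (hgood2 : shiftElem k 1 (shiftElem k 1 s0) ≠ g) : False := by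
  have A1 : shiftElem k 1 g = o1 ∨ shiftElem k 1 o1 = g := by
    rcases L1 hg H hs0 hs1C hgC ho1 hg1 hgs0 hgs1 h1s0 h1s1 with h | ⟨h, _⟩ | ⟨_, h⟩
    · exact h
    · exact absurd h hgood1
    · exact absurd h hgood2
  have A2 : shiftElem k 1 g = o2 ∨ shiftElem k 1 o2 = g := by
    rcases L1 hg H hs0 hs1C hgC ho2 hg2 hgs0 hgs1 h2s0 h2s1 with h | ⟨h, _⟩ | ⟨_, h⟩
    · exact h
    · exact absurd h hgood1
    · exact absurd h hgood2
  rcases A1 with h1 | h1 <;> rcases A2 with h2 | h2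
  · exact h12 (h1.symm.trans h2)
  · exact core5 hg H hs0 hs1C ho1 ho2 hgs0 hgs1 h1s0 h1s1 h2s0 h2s1 hg1 hg2 h12 h1 h2
  · exact core5 hg H hs0 hs1C ho2 ho1 hgs0 hgs1 h2s0 h2s1 h1s0 h1s1 hg2 hg1 (Ne.symm h12) h2 h1
  · exact h12 (succ_inj (hg ho1) (hg ho2) (h1.trans h2.symm))

lemma exists_pair {C : Finset ℕ} (hg : C ⊆ ground k) (h3 : 3 ≤ C.card)
    (H : ∀ w ⊆ C, w.card = 3 → ¬ Stable k w) :
    ∃ s0 ∈ C, shiftElem k 1 s0 ∈ C := by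
  obtain ⟨w, hw, hw3⟩ := Finset.exists_subset_card_eq h3
  have hns := H w hw hw3
  unfold Stable at hns
  push_neg at hns
  obtain ⟨t, ht, ht'⟩ := hns
  exact ⟨t, hw ht, hw ht'⟩

lemma card_le4 {C : Finset ℕ} (hg : C ⊆ ground k) (h3 : 3 ≤ C.card)
    (H : ∀ w ⊆ C, w.card = 3 → ¬ Stable k w) : C.card ≤ 4 := by
  by_contra hlt
  push_neg at hlt
  obtain ⟨s0, hs0, hs1C⟩ := exists_pair hg h3 H
  have hD : 3 ≤ (C \ {s0, shiftElem k 1 s0}).card := by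
    have h1 : C.card ≤ (C \ {s0, shiftElem k 1 s0}).card + ({s0, shiftElem k 1 s0} : Finset ℕ).card :=
      Finset.card_le_card_sdiff_add_card
    have h2 : ({s0, shiftElem k 1 s0} : Finset ℕ).card ≤ 2 :=
      (Finset.card_insert_le _ _).trans (by simp)
    omega
  obtain ⟨w, hw, hw3⟩ := Finset.exists_subset_card_eq hD
  rw [Finset.card_eq_three] at hw3
  obtain ⟨x, y, z, hxy, hxz, hyz, rfl⟩ := hw3
  have hx := hw (show x ∈ ({x, y, z} : Finset ℕ) by simp)
  have hy := hw (show y ∈ ({x, y, z} : Finset ℕ) by simp)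
  have hz := hw (show z ∈ ({x, y, z} : Finset ℕ) by simp)
  rw [Finset.mem_sdiff] at hx hy hz
  simp only [Finset.mem_insert, Finset.mem_singleton, not_or] at hx hy hz
  obtain ⟨hxC, hxs0, hxs1⟩ := hx
  obtain ⟨hyC, hys0, hys1⟩ := hy
  obtain ⟨hzC, hzs0, hzs1⟩ := hz
  by_cases Bx : shiftElem k 1 x = s0 ∨ shiftElem k 1 (shiftElem k 1 s0) = x
  · by_cases By : shiftElem k 1 y = s0 ∨ shiftElem k 1 (shiftElem k 1 s0) = y
    · -- both bad, so z is good
      have Bz : ¬ (shiftElem k 1 z = s0 ∨ shiftElem k 1 (shiftElem k 1 s0) = z) := by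
        rintro (hb | hb) <;> rcases Bx with hb1 | hb1 <;> rcases By with hb2 | hb2
        · exact hxz (succ_inj (hg hxC) (hg hzC) (hb1.trans hb.symm))
        · exact hxz (succ_inj (hg hxC) (hg hzC) (hb1.trans hb.symm))
        · exact hyz (succ_inj (hg hyC) (hg hzC) (hb2.trans hb.symm))
        · exact hxy (hb1.symm.trans hb2)
        · exact hxy (succ_inj (hg hxC) (hg hyC) (hb1.trans hb2.symm))
        · exact hyz (hb2.symm.trans hb)
        · exact hxz (hb1.symm.trans hb)
        · exact hxz (hb1.symm.trans hb)
      push_neg at Bz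
      exact core4 hg H hs0 hs1C hzC hxC hyC hzs0 hzs1 hxs0 hxs1 hys0 hys1
        (Ne.symm hxz) (Ne.symm hyz) hxy Bz.1 Bz.2
    · push_neg at By
      exact core4 hg H hs0 hs1C hyC hxC hzC hys0 hys1 hxs0 hxs1 hzs0 hzs1
        (Ne.symm hxy) hyz hxz By.1 By.2
  · push_neg at Bx
    exact core4 hg H hs0 hs1C hxC hyC hzC hxs0 hxs1 hys0 hys1 hzs0 hzs1
      hxy hxz hyz Bx.1 Bx.2

end
end KG
namespace KG
section
variable {k : ℕ}

lemma shapeA {C : Finset ℕ} (hg : C ⊆ ground k) (hcard : C.card = 3)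
    {s0 : ℕ} (hs0 : s0 ∈ C) (hs1C : shiftElem k 1 s0 ∈ C) :
    ∃ s ∈ ground k, ∃ t ∈ ground k, t ≠ shiftElem k (k + 5) s ∧ t ≠ s ∧ t ≠ shiftElem k 1 s ∧
      C = {s, shiftElem k 1 s, t} := by
  have hs0g := hg hs0
  have hs1g := hg hs1C
  have hss : s0 ≠ shiftElem k 1 s0 := (succ_ne_self hs0g).symm
  have hsub : ({s0, shiftElem k 1 s0} : Finset ℕ) ⊆ C := by
    simp [Finset.insert_subset_iff, hs0, hs1C]
  have hDcard : (C \ {s0, shiftElem k 1 s0}).card = 1 := by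
    rw [Finset.card_sdiff_of_subset hsub, hcard, Finset.card_insert_of_notMem (by simp [hss]),
      Finset.card_singleton]
  obtain ⟨t, ht⟩ := Finset.card_eq_one.mp hDcard
  have htD : t ∈ C \ {s0, shiftElem k 1 s0} := by rw [ht]; simp
  rw [Finset.mem_sdiff] at htD
  obtain ⟨htC, htn⟩ := htD
  simp only [Finset.mem_insert, Finset.mem_singleton, not_or] at htn
  obtain ⟨hts0, hts1⟩ := htn
  have htg := hg htC
  have hc3 : ({s0, shiftElem k 1 s0, t} : Finset ℕ).card = 3 := by
    rw [Finset.card_insert_of_notMem (by simp [hss, Ne.symm hts0]),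
      Finset.card_insert_of_notMem (by simp [Ne.symm hts1]), Finset.card_singleton]
  have hCeq : C = {s0, shiftElem k 1 s0, t} :=
    (Finset.eq_of_subset_of_card_le
      (by simp [Finset.insert_subset_iff, hs0, hs1C, htC]) (by rw [hcard, hc3])).symm
  have es1 : ((shiftElem k 1 s0 : ℕ) : ZMod (k+6)) = (s0 : ZMod (k+6)) + 1 := E1 hs0g rfl
  by_cases hts : shiftElem k 1 t = s0
  · -- use s := t, t' := s1
    have hsucc : shiftElem k 1 t = s0 := hts
    have es0 : ((s0 : ℕ) : ZMod (k+6)) = (t : ZMod (k+6)) + 1 := E1 htg hsucc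
    refine ⟨t, htg, shiftElem k 1 s0, hs1g, ?_, Ne.symm hts1, ?_, ?_⟩
    · intro heq
      have e2 : ((shiftElem k (k+5) t : ℕ) : ZMod (k+6)) = (t : ZMod (k+6)) + ((k+5 : ℕ) : ZMod (k+6)) :=
        E_shift (mem_ground.mp htg).1 (k+5)
      rw [heq] at es1
      refine natCast_ne_zero (k := k) (m := k + 3) (by omega) (by omega) ?_
      push_cast at es1 es0 e2 ⊢
      linear_combination es1 - e2 + es0
    · rw [hsucc]; exact Ne.symm hss
    · rw [hCeq, hsucc]
      ext w; simp; tauto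
  · refine ⟨s0, hs0g, t, htg, ?_, hts0, hts1, hCeq⟩
    intro heq
    apply hts
    apply E_inj (shiftElem_mem_ground k 1 t) hs0g
    have e1 : ((shiftElem k 1 t : ℕ) : ZMod (k+6)) = (t : ZMod (k+6)) + 1 := E1 htg rfl
    have e2 : ((shiftElem k (k+5) s0 : ℕ) : ZMod (k+6)) = (s0 : ZMod (k+6)) + ((k+5 : ℕ) : ZMod (k+6)) :=
      E_shift (mem_ground.mp hs0g).1 (k+5)
    have hz : ((k+6 : ℕ) : ZMod (k+6)) = 0 := ZMod.natCast_self _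
    have e3 : (t : ZMod (k+6)) = (s0 : ZMod (k+6)) + ((k+5 : ℕ) : ZMod (k+6)) := by
      rw [heq]; exact e2
    push_cast at e1 e3 hz ⊢
    linear_combination e1 + e3 + hz

lemma shapeB' {a b : ℕ} (ha : a ∈ ground k) (hb : b ∈ ground k) (hab : a < b)
    (h1 : shiftElem k 1 a ≠ b) (h2 : shiftElem k 1 b ≠ a) :
    ∃ s ∈ Finset.Icc 1 (k + 4), ∃ u ∈ Jset k s,
      ({a, shiftElem k 1 a, b, shiftElem k 1 b} : Finset ℕ)
        = {s, shiftElem k 1 s, u, shiftElem k 1 u} := by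
  rw [mem_ground] at ha hb
  have hsa : shiftElem k 1 a = a + 1 := by
    rw [shift1_eq (mem_ground.mpr ha), if_neg (by omega)]
  by_cases hbtop : b = k + 6
  · have hsb : shiftElem k 1 b = 1 := by
      rw [shift1_eq (mem_ground.mpr hb), if_pos hbtop]
    have ha2 : 2 ≤ a := by
      rcases Nat.lt_or_ge a 2 with h | h
      · exfalso; apply h2; rw [hsb]; omega
      · exact h
    have ha4 : a ≤ k + 4 := by
      rcases Nat.lt_or_ge a (k + 5) with h | h
      · omega
      · exfalso; apply h1; rw [hsa]; omega
    refine ⟨a, by simp [Finset.mem_Icc]; omega, b, ?_, rfl⟩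
    rw [Jset, if_neg (by omega), if_pos ⟨by omega, by omega⟩]
    simp [Finset.mem_Icc]; omega
  · have hsb : shiftElem k 1 b = b + 1 := by
      rw [shift1_eq (mem_ground.mpr hb), if_neg hbtop]
    have hb2 : a + 2 ≤ b := by
      rcases Nat.lt_or_ge b (a + 2) with h | h
      · exfalso; apply h1; rw [hsa]; omega
      · exact h
    refine ⟨a, by simp [Finset.mem_Icc]; omega, b, ?_, rfl⟩
    by_cases ha1 : a = 1
    · rw [Jset, if_pos ha1]; simp [Finset.mem_Icc]; omega
    · rw [Jset, if_neg ha1, if_pos ⟨by omega, by omega⟩]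
      simp [Finset.mem_Icc]; omega

lemma shapeB {a b : ℕ} (ha : a ∈ ground k) (hb : b ∈ ground k) (hab : a ≠ b)
    (h1 : shiftElem k 1 a ≠ b) (h2 : shiftElem k 1 b ≠ a) :
    ∃ s ∈ Finset.Icc 1 (k + 4), ∃ u ∈ Jset k s,
      ({a, shiftElem k 1 a, b, shiftElem k 1 b} : Finset ℕ)
        = {s, shiftElem k 1 s, u, shiftElem k 1 u} := by
  rcases lt_or_gt_of_ne hab with h | h
  · exact shapeB' ha hb h h1 h2
  · obtain ⟨s, hs, u, hu, heq⟩ := shapeB' hb ha h h2 h1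
    refine ⟨s, hs, u, hu, ?_⟩
    rw [← heq]; ext w; simp; tauto

lemma main {C : Finset ℕ} (hg : C ⊆ ground k) (h3 : 3 ≤ C.card)
    (H : ∀ w ⊆ C, w.card = 3 → ¬ Stable k w) :
    (∃ s ∈ ground k, ∃ t ∈ ground k, t ≠ shiftElem k (k + 5) s ∧ t ≠ s ∧ t ≠ shiftElem k 1 s ∧
      C = {s, shiftElem k 1 s, t}) ∨
    (∃ s ∈ Finset.Icc 1 (k + 4), ∃ u ∈ Jset k s,
      C = {s, shiftElem k 1 s, u, shiftElem k 1 u}) := by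
  obtain ⟨s0, hs0, hs1C⟩ := exists_pair hg h3 H
  have h4 := card_le4 hg h3 H
  have hcase : C.card = 3 ∨ C.card = 4 := by omega
  rcases hcase with hcard | hcard
  · exact Or.inl (shapeA hg hcard hs0 hs1C)
  · right
    have hs0g := hg hs0
    have hs1g := hg hs1C
    have hss : s0 ≠ shiftElem k 1 s0 := (succ_ne_self hs0g).symm
    have hsub : ({s0, shiftElem k 1 s0} : Finset ℕ) ⊆ C := by
      simp [Finset.insert_subset_iff, hs0, hs1C]
    have hDcard : (C \ {s0, shiftElem k 1 s0}).card = 2 := by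
      rw [Finset.card_sdiff_of_subset hsub, hcard, Finset.card_insert_of_notMem (by simp [hss]),
        Finset.card_singleton]
    obtain ⟨x, y, hxy, hDeq⟩ := Finset.card_eq_two.mp hDcard
    have hxD : x ∈ C \ {s0, shiftElem k 1 s0} := by rw [hDeq]; simp
    have hyD : y ∈ C \ {s0, shiftElem k 1 s0} := by rw [hDeq]; simp
    rw [Finset.mem_sdiff] at hxD hyD
    obtain ⟨hxC, hxn⟩ := hxD
    obtain ⟨hyC, hyn⟩ := hyD
    simp only [Finset.mem_insert, Finset.mem_singleton, not_or] at hxn hyn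
    obtain ⟨hxs0, hxs1⟩ := hxn
    obtain ⟨hys0, hys1⟩ := hyn
    have hc4 : ({s0, shiftElem k 1 s0, x, y} : Finset ℕ).card = 4 := by
      rw [Finset.card_insert_of_notMem (by simp [hss, Ne.symm hxs0, Ne.symm hys0]),
        Finset.card_insert_of_notMem (by simp [Ne.symm hxs1, Ne.symm hys1]),
        Finset.card_insert_of_notMem (by simp [hxy]), Finset.card_singleton]
    have hCeq : C = {s0, shiftElem k 1 s0, x, y} :=
      (Finset.eq_of_subset_of_card_le
        (by simp [Finset.insert_subset_iff, hs0, hs1C, hxC, hyC]) (by rw [hcard, hc4])).symm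
    rcases L1 hg H hs0 hs1C hxC hyC hxy hxs0 hxs1 hys0 hys1 with (h | h) | ⟨hx1, hy1⟩ | ⟨hy1, hx1⟩
    · -- succ x = y : pairs (s0, x)
      obtain ⟨s, hs, u, hu, heq⟩ := shapeB hs0g (hg hxC) (Ne.symm hxs0)
        (fun hc => hxs1 hc.symm) (fun hc => hys0 (h.symm.trans hc))
      refine ⟨s, hs, u, hu, ?_⟩
      rw [hCeq, ← heq, h]
    · -- succ y = x : pairs (s0, y)
      obtain ⟨s, hs, u, hu, heq⟩ := shapeB hs0g (hg hyC) (Ne.symm hys0)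
        (fun hc => hys1 hc.symm) (fun hc => hxs0 (h.symm.trans hc))
      refine ⟨s, hs, u, hu, ?_⟩
      rw [hCeq, ← heq, h]
      ext w; simp; tauto
    · -- succ x = s0, succ s1 = y : pairs (x, s1)
      obtain ⟨s, hs, u, hu, heq⟩ := shapeB (hg hxC) hs1g hxs1
        (by rw [hx1]; exact hss) (by rw [hy1]; exact Ne.symm hxy)
      refine ⟨s, hs, u, hu, ?_⟩
      rw [hCeq, ← heq, hx1, hy1]
      ext w; simp; tauto
    · -- succ y = s0, succ s1 = x : pairs (y, s1)
      obtain ⟨s, hs, u, hu, heq⟩ := shapeB (hg hyC) hs1g hys1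
        (by rw [hy1]; exact hss) (by rw [hx1]; exact hxy)
      refine ⟨s, hs, u, hu, ?_⟩
      rw [hCeq, ← heq, hy1, hx1]
      ext w; simp; tauto

end
end KG
namespace KG
section
variable {k : ℕ}

lemma mem_Csets {σ : Finset (Finset ℕ)} {x : ℕ} :
    x ∈ Csets k σ ↔ x ∈ ground k ∧ ∀ v ∈ σ, x ∉ v := by
  simp [Csets, Finset.mem_sup]

lemma common_sub {σ : Finset (Finset ℕ)} {w : Finset ℕ} (hne : σ.Nonempty)
    (hall : ∀ v ∈ σ, AdjKG k w v) : w ⊆ Csets k σ ∧ w.card = 3 := by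
  obtain ⟨v0, hv0⟩ := hne
  have hw : IsVertex k w := (hall v0 hv0).1
  refine ⟨fun x hx => mem_Csets.mpr ⟨hw.1 hx, fun v hv => ?_⟩, hw.2⟩
  exact Finset.disjoint_left.mp (hall v hv).2.2 hx

lemma cardA {σ : Finset (Finset ℕ)} (h : InA k σ) : (Csets k σ).card = 3 := by
  obtain ⟨s, hs, t, ht, h1, h2, h3, heq⟩ := h
  rw [heq, Finset.card_insert_of_notMem
      (by simp [(succ_ne_self hs).symm, Ne.symm h2]),
    Finset.card_insert_of_notMem (by simp [Ne.symm h3]), Finset.card_singleton]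

lemma B_distinct {s u : ℕ} (hs : s ∈ Finset.Icc 1 (k + 4)) (hu : u ∈ Jset k s) :
    s ≠ shiftElem k 1 s ∧ s ≠ u ∧ s ≠ shiftElem k 1 u ∧ shiftElem k 1 s ≠ u ∧
      shiftElem k 1 s ≠ shiftElem k 1 u ∧ u ≠ shiftElem k 1 u := by
  rw [Finset.mem_Icc] at hs
  have hsg : s ∈ ground k := mem_ground.mpr (by omega)
  have hss : shiftElem k 1 s = s + 1 := by
    rw [shift1_eq hsg, if_neg (by omega)]
  have hu' : (s = 1 ∧ 3 ≤ u ∧ u ≤ k + 5) ∨ (1 < s ∧ s < k + 5 ∧ s + 2 ≤ u ∧ u ≤ k + 6) := by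
    unfold Jset at hu
    split at hu
    · rw [Finset.mem_Icc] at hu; left; exact ⟨by assumption, hu.1, hu.2⟩
    · split at hu
      · rw [Finset.mem_Icc] at hu
        rename_i hcond
        right; exact ⟨hcond.1, hcond.2, hu.1, hu.2⟩
      · simp at hu
  have hug : u ∈ ground k := by
    rcases hu' with ⟨_, h1, h2⟩ | ⟨_, _, h1, h2⟩ <;> exact mem_ground.mpr (by omega)
  by_cases hut : u = k + 6
  · have hsu : shiftElem k 1 u = 1 := by rw [shift1_eq hug, if_pos hut]
    rw [hss, hsu]
    rcases hu' with ⟨h0, h1, h2⟩ | ⟨h0, h0', h1, h2⟩ <;> refine ⟨?_, ?_, ?_, ?_, ?_, ?_⟩ <;> omega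
  · have hsu : shiftElem k 1 u = u + 1 := by rw [shift1_eq hug, if_neg hut]
    rw [hss, hsu]
    rcases hu' with ⟨h0, h1, h2⟩ | ⟨h0, h0', h1, h2⟩ <;> refine ⟨?_, ?_, ?_, ?_, ?_, ?_⟩ <;> omega

lemma cardB {σ : Finset (Finset ℕ)} (h : InB k σ) : (Csets k σ).card = 4 := by
  obtain ⟨s, hs, u, hu, heq⟩ := h
  obtain ⟨d1, d2, d3, d4, d5, d6⟩ := B_distinct hs hu
  rw [heq, Finset.card_insert_of_notMem (by simp [d1, d2, d3]),
    Finset.card_insert_of_notMem (by simp [d4, d5]),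
    Finset.card_insert_of_notMem (by simp [d6]), Finset.card_singleton]

lemma stable_sub_A {s t : ℕ} (hs : s ∈ ground k) (h2 : t ≠ s) (h3 : t ≠ shiftElem k 1 s)
    {w : Finset ℕ} (hsub : w ⊆ {s, shiftElem k 1 s, t}) (hw3 : w.card = 3)
    (hst : Stable k w) : False := by
  have hc3 : ({s, shiftElem k 1 s, t} : Finset ℕ).card = 3 := by
    rw [Finset.card_insert_of_notMem (by simp [(succ_ne_self hs).symm, Ne.symm h2]),
      Finset.card_insert_of_notMem (by simp [Ne.symm h3]), Finset.card_singleton]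
  have hweq : w = {s, shiftElem k 1 s, t} :=
    Finset.eq_of_subset_of_card_le hsub (by omega)
  exact hst s (by rw [hweq]; simp) (by rw [hweq]; simp)

lemma stable_sub_B {s u : ℕ} (hs : s ∈ Finset.Icc 1 (k + 4)) (hu : u ∈ Jset k s)
    {w : Finset ℕ} (hsub : w ⊆ {s, shiftElem k 1 s, u, shiftElem k 1 u}) (hw3 : w.card = 3)
    (hst : Stable k w) : False := by
  obtain ⟨d1, d2, d3, d4, d5, d6⟩ := B_distinct hs hu
  set F : Finset ℕ := {s, shiftElem k 1 s, u, shiftElem k 1 u} with hF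
  by_cases hP : s ∈ w ∧ shiftElem k 1 s ∈ w
  · exact hst s hP.1 hP.2
  by_cases hQ : u ∈ w ∧ shiftElem k 1 u ∈ w
  · exact hst u hQ.1 hQ.2
  obtain ⟨α, hα1, hα2⟩ : ∃ α, (α = s ∨ α = shiftElem k 1 s) ∧ α ∉ w := by
    rcases not_and_or.mp hP with h | h
    · exact ⟨s, Or.inl rfl, h⟩
    · exact ⟨shiftElem k 1 s, Or.inr rfl, h⟩
  obtain ⟨β, hβ1, hβ2⟩ : ∃ β, (β = u ∨ β = shiftElem k 1 u) ∧ β ∉ w := by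
    rcases not_and_or.mp hQ with h | h
    · exact ⟨u, Or.inl rfl, h⟩
    · exact ⟨shiftElem k 1 u, Or.inr rfl, h⟩
  have hαβ : β ≠ α := by
    rcases hα1 with rfl | rfl <;> rcases hβ1 with rfl | rfl
    · exact Ne.symm d2
    · exact fun hc => d3 hc.symm
    · exact Ne.symm d4
    · exact fun hc => d5 hc.symm
  have hαF : α ∈ F := by rcases hα1 with rfl | rfl <;> simp [hF]
  have hβF : β ∈ F.erase α := Finset.mem_erase.mpr
    ⟨hαβ, by rcases hβ1 with rfl | rfl <;> simp [hF]⟩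
  have hwsub : w ⊆ (F.erase α).erase β := fun x hx => Finset.mem_erase.mpr
    ⟨fun hxe => hβ2 (hxe ▸ hx), Finset.mem_erase.mpr
      ⟨fun hxe => hα2 (hxe ▸ hx), hsub hx⟩⟩
  have hFc : F.card = 4 := by
    rw [hF, Finset.card_insert_of_notMem (by simp [d1, d2, d3]),
      Finset.card_insert_of_notMem (by simp [d4, d5]),
      Finset.card_insert_of_notMem (by simp [d6]), Finset.card_singleton]
  have := Finset.card_le_card hwsub
  rw [Finset.card_erase_of_mem hβF, Finset.card_erase_of_mem hαF, hFc] at this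
  omega

end
end KG
/-- `N(S_{3,k})` is the disjoint union of `N(SG_{3,k})`, the `A_k^{s,t}`,
the `B_k^{s,u}` and `C_k`. -/
theorem stmt_5 (k : ℕ) (σ : Finset (Finset ℕ)) (hσ : KG.SimplexS k σ) :
    (KG.SimplexSG k σ ∨ KG.InA k σ ∨ KG.InB k σ ∨ KG.InC k σ) ∧
    ¬ (KG.SimplexSG k σ ∧ KG.InA k σ) ∧
    ¬ (KG.SimplexSG k σ ∧ KG.InB k σ) ∧
    ¬ (KG.SimplexSG k σ ∧ KG.InC k σ) ∧
    ¬ (KG.InA k σ ∧ KG.InB k σ) ∧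
    ¬ (KG.InA k σ ∧ KG.InC k σ) ∧
    ¬ (KG.InB k σ ∧ KG.InC k σ) := by
  obtain ⟨hne, u0, hu0⟩ := hσ
  have hver : ∀ v ∈ σ, KG.IsVertex k v := fun v hv => (hu0 v hv).1.2.1
  have hCg : KG.Csets k σ ⊆ KG.ground k := Finset.sdiff_subset
  have hu0' : ∀ v ∈ σ, KG.AdjKG k u0 v := fun v hv => (hu0 v hv).1
  have hsub0 := KG.common_sub hne hu0'
  have hC3 : 3 ≤ (KG.Csets k σ).card := by
    rw [← hsub0.2]; exact Finset.card_le_card hsub0.1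
  -- a stable common neighbour contradicts InA / InB
  have noA : ∀ w : Finset ℕ, w ⊆ KG.Csets k σ → w.card = 3 → KG.Stable k w →
      KG.InA k σ → False := by
    intro w hw hw3 hwst hA
    obtain ⟨s, hs, t, ht, h1, h2, h3, heq⟩ := hA
    exact KG.stable_sub_A hs h2 h3 (heq ▸ hw) hw3 hwst
  have noB : ∀ w : Finset ℕ, w ⊆ KG.Csets k σ → w.card = 3 → KG.Stable k w →
      KG.InB k σ → False := by
    intro w hw hw3 hwst hB
    obtain ⟨s, hs, u, hu, heq⟩ := hB
    exact KG.stable_sub_B hs hu (heq ▸ hw) hw3 hwst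
  refine ⟨?_, ?_, ?_, ?_, ?_, ?_, ?_⟩
  · -- coverage
    by_cases hc : ∃ v ∈ σ, ¬ KG.Stable k v
    · exact Or.inr (Or.inr (Or.inr hc))
    push_neg at hc
    by_cases hsg : KG.SimplexSG k σ
    · exact Or.inl hsg
    have H : ∀ w ⊆ KG.Csets k σ, w.card = 3 → ¬ KG.Stable k w := by
      intro w hw hw3 hwst
      refine hsg ⟨hne, hc, w, hwst, fun v hv => ⟨⟨hw.trans hCg, hw3⟩, hver v hv, ?_⟩⟩
      exact Finset.disjoint_left.mpr fun x hxw hxv =>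
        (KG.mem_Csets.mp (hw hxw)).2 v hv hxv
    rcases KG.main hCg hC3 H with hA | hB
    · exact Or.inr (Or.inl hA)
    · exact Or.inr (Or.inr (Or.inl hB))
  · rintro ⟨⟨hne', hallst, w, hwst, hwadj⟩, hA⟩
    obtain ⟨hw, hw3⟩ := KG.common_sub hne' hwadj
    exact noA w hw hw3 hwst hA
  · rintro ⟨⟨hne', hallst, w, hwst, hwadj⟩, hB⟩
    obtain ⟨hw, hw3⟩ := KG.common_sub hne' hwadj
    exact noB w hw hw3 hwst hB
  · rintro ⟨hsg, v, hv, hnst⟩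
    exact hnst (hsg.2.1 v hv)
  · rintro ⟨hA, hB⟩
    have h3 := KG.cardA hA
    have h4 := KG.cardB hB
    omega
  · rintro ⟨hA, v, hv, hnst⟩
    have hst : KG.Stable k u0 := by
      rcases (hu0 v hv).2 with h | h
      · exact h
      · exact absurd h hnst
    exact noA u0 hsub0.1 hsub0.2 hst hA
  · rintro ⟨hB, v, hv, hnst⟩
    have hst : KG.Stable k u0 := by
      rcases (hu0 v hv).2 with h | h
      · exact h
      · exact absurd h hnst
    exact noB u0 hsub0.1 hsub0.2 hst hB
end

section
/- The map φ_k from the face poset of N(S_{3,k}) to the chain a_k^1 > a_k^2 > a_k^3 > a_k^4, sending simplices in ⊔A_k^{s,t} to a_k^1, simplices in ⊔B_k^{s,u} to a_k^2, simplices containing an unstable vertex to a_k^3, and simplices of N(SG_{3,k}) to a_k^4, is order-preserving. -/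
open Finset

namespace KG

lemma shift1_eq_s7 (k x : ℕ) (h1 : 1 ≤ x) (h2 : x ≤ k + 5) : shiftElem k 1 x = x + 1 := by
  unfold shiftElem
  have h : x - 1 + 1 = x := by omega
  rw [h, Nat.mod_eq_of_lt (by omega)]

lemma shift1_top (k : ℕ) : shiftElem k 1 (k + 6) = 1 := by
  unfold shiftElem
  have h : k + 6 - 1 + 1 = k + 6 := by omega
  rw [h, Nat.mod_self]

lemma shiftprev_eq (k s : ℕ) (h1 : 2 ≤ s) (h2 : s ≤ k + 6) : shiftElem k (k + 5) s = s - 1 := by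
  unfold shiftElem
  have h : s - 1 + (k + 5) = (s - 2) + (k + 6) := by omega
  rw [h, Nat.add_mod_right, Nat.mod_eq_of_lt (by omega)]
  omega

lemma shiftprev_one (k : ℕ) : shiftElem k (k + 5) 1 = k + 6 := by
  unfold shiftElem
  rw [Nat.mod_eq_of_lt (by omega)]
  omega

lemma next_ne (k s : ℕ) (h1 : 1 ≤ s) (h2 : s ≤ k + 6) : shiftElem k 1 s ≠ s := by
  by_cases h : s ≤ k + 5
  · rw [shift1_eq_s7 k s h1 h]; omega
  · have hs : s = k + 6 := by omega
    rw [hs, shift1_top]; omega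

lemma csets_mono (k : ℕ) {τ σ : Finset (Finset ℕ)} (h : τ ⊆ σ) : Csets k σ ⊆ Csets k τ := by
  intro x hx
  simp only [Csets, Finset.mem_sdiff] at hx ⊢
  refine ⟨hx.1, fun hm => hx.2 ?_⟩
  exact Finset.le_iff_subset.mp (Finset.sup_mono h) hm

lemma three_le_card (k : ℕ) {σ : Finset (Finset ℕ)} (h : SimplexS k σ) :
    3 ≤ (Csets k σ).card := by
  obtain ⟨⟨v, hv⟩, u, hu⟩ := h
  obtain ⟨⟨⟨husub, hucard⟩, _⟩, _⟩ := hu v hv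
  have husubC : u ⊆ Csets k σ := by
    intro x hx
    simp only [Csets, Finset.mem_sdiff]
    refine ⟨husub hx, fun hm => ?_⟩
    rw [Finset.mem_sup] at hm
    obtain ⟨w, hw, hxw⟩ := hm
    exact (Finset.disjoint_left.mp (hu w hw).1.2.2 hx) hxw
  calc 3 = u.card := hucard.symm
    _ ≤ (Csets k σ).card := Finset.card_le_card husubC

lemma mkInA' {k : ℕ} {σ : Finset (Finset ℕ)} (s t : ℕ)
    (h1 : 1 ≤ s) (h2 : s ≤ k + 6) (h3 : 1 ≤ t) (h4 : t ≤ k + 6)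
    (hne1 : t ≠ shiftElem k (k + 5) s) (hne2 : t ≠ s) (hne3 : t ≠ shiftElem k 1 s)
    (hC : Csets k σ = {s, shiftElem k 1 s, t}) : InA k σ :=
  ⟨s, by simp only [ground, Finset.mem_Icc]; omega,
   t, by simp only [ground, Finset.mem_Icc]; omega, hne1, hne2, hne3, hC⟩

lemma csets_eq_triple {k : ℕ} {σ : Finset (Finset ℕ)} {Q : Finset ℕ} {a b c x : ℕ}
    (hss : Csets k σ ⊆ Q) (hcard3 : 3 ≤ (Csets k σ).card) (hxn : x ∉ Csets k σ)
    (hQ : ∀ y, y ∈ Q → y ≠ x → y = a ∨ y = b ∨ y = c)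
    (hab : a ≠ b) (hac : a ≠ c) (hbc : b ≠ c) :
    Csets k σ = {a, b, c} := by
  have hsubT : Csets k σ ⊆ {a, b, c} := by
    intro y hy
    have h1 := hQ y (hss hy) (fun h => hxn (h ▸ hy))
    simpa using h1
  have hcardT : ({a, b, c} : Finset ℕ).card = 3 := by
    rw [Finset.card_insert_of_notMem, Finset.card_insert_of_notMem, Finset.card_singleton]
    · simpa using hbc
    · simp only [Finset.mem_insert, Finset.mem_singleton]
      rintro (h | h)
      · exact hab h
      · exact hac h
  exact Finset.eq_of_subset_of_card_le hsubT (by omega)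

end KG

/-- the map `φ_k` to the chain `a_k^1 > a_k^2 > a_k^3 > a_k^4` is
order-preserving: if `τ ⊆ σ` then `φ_k(σ) ≥ φ_k(τ)`. -/
theorem stmt_7 (k : ℕ) (τ σ : Finset (Finset ℕ))
    (hτ : KG.SimplexS k τ) (hσ : KG.SimplexS k σ) (hsub : τ ⊆ σ) :
    (KG.InA k τ → KG.InA k σ) ∧
    (KG.InB k τ → KG.InA k σ ∨ KG.InB k σ) ∧
    (KG.InC k τ → KG.InA k σ ∨ KG.InB k σ ∨ KG.InC k σ) := by
  have hmono := KG.csets_mono k hsub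
  have hcard3 := KG.three_le_card k hσ
  refine ⟨?_, ?_, ?_⟩
  · -- Part A
    rintro ⟨s, hs, t, ht, h1, h2, h3, hC⟩
    have hs' := hs
    simp only [KG.ground, Finset.mem_Icc] at hs'
    have hns := KG.next_ne k s hs'.1 hs'.2
    have hcardτ : (KG.Csets k τ).card = 3 := by
      rw [hC]
      rw [Finset.card_insert_of_notMem, Finset.card_insert_of_notMem, Finset.card_singleton]
      · simp only [Finset.mem_singleton]
        exact fun h => h3 h.symm
      · simp only [Finset.mem_insert, Finset.mem_singleton]
        rintro (h | h)
        · exact hns h.symm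
        · exact h2 h.symm
    have heq : KG.Csets k σ = KG.Csets k τ :=
      Finset.eq_of_subset_of_card_le hmono (by omega)
    exact ⟨s, hs, t, ht, h1, h2, h3, by rw [heq]; exact hC⟩
  · -- Part B
    rintro ⟨s, hsmem, u, humem, hC⟩
    have hs := hsmem; have hu := humem
    rw [Finset.mem_Icc] at hs
    have hfacts : 1 ≤ s ∧ s ≤ k + 4 ∧ s + 2 ≤ u ∧ u ≤ k + 6 ∧ (s = 1 → u ≤ k + 5) := by
      unfold KG.Jset at hu
      split at hu
      · rename_i h1
        rw [Finset.mem_Icc] at hu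
        omega
      · split at hu
        · rename_i h1 h2
          rw [Finset.mem_Icc] at hu
          omega
        · simp at hu
    obtain ⟨hs1, hs4, hu2, hu6, hu5⟩ := hfacts
    have hnext_s : KG.shiftElem k 1 s = s + 1 := KG.shift1_eq_s7 k s (by omega) (by omega)
    rw [hnext_s] at hC
    by_cases hwrap : u ≤ k + 5
    · have hnext_u : KG.shiftElem k 1 u = u + 1 := KG.shift1_eq_s7 k u (by omega) hwrap
      rw [hnext_u] at hC
      by_cases heq : KG.Csets k σ = KG.Csets k τ
      · right
        exact ⟨s, hsmem, u, humem, by rw [heq, hC, hnext_s, hnext_u]⟩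
      · left
        have hss : KG.Csets k σ ⊆ {s, s + 1, u, u + 1} := hC ▸ hmono
        have hmiss : ∃ x ∈ ({s, s + 1, u, u + 1} : Finset ℕ), x ∉ KG.Csets k σ := by
          by_contra hcon
          push_neg at hcon
          exact heq (by rw [hC]; exact Finset.Subset.antisymm hss (fun x hx => hcon x hx))
        obtain ⟨x, hxq, hxn⟩ := hmiss
        simp only [Finset.mem_insert, Finset.mem_singleton] at hxq
        rcases hxq with hxe | hxe | hxe | hxe <;> rw [hxe] at hxn
        · -- missing s : triple {s+1, u, u+1}
          have hCσ : KG.Csets k σ = {s + 1, u, u + 1} :=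
            KG.csets_eq_triple hss hcard3 hxn
              (by intro y hyq hyx
                  simp only [Finset.mem_insert, Finset.mem_singleton] at hyq
                  omega)
              (by omega) (by omega) (by omega)
          by_cases hu3 : u = s + 2
          · exact KG.mkInA' (s + 1) (s + 3) (by omega) (by omega) (by omega) (by omega)
              (by rw [KG.shiftprev_eq k (s + 1) (by omega) (by omega)]; omega)
              (by omega)
              (by rw [KG.shift1_eq_s7 k (s + 1) (by omega) (by omega)]; omega)
              (by rw [KG.shift1_eq_s7 k (s + 1) (by omega) (by omega), hCσ]
                  ext y; simp only [Finset.mem_insert, Finset.mem_singleton]; omega)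
          · exact KG.mkInA' u (s + 1) (by omega) (by omega) (by omega) (by omega)
              (by rw [KG.shiftprev_eq k u (by omega) (by omega)]; omega)
              (by omega)
              (by rw [KG.shift1_eq_s7 k u (by omega) (by omega)]; omega)
              (by rw [KG.shift1_eq_s7 k u (by omega) (by omega), hCσ]
                  ext y; simp only [Finset.mem_insert, Finset.mem_singleton]; omega)
        · -- missing s+1 : triple {s, u, u+1}
          have hCσ : KG.Csets k σ = {s, u, u + 1} :=
            KG.csets_eq_triple hss hcard3 hxn
              (by intro y hyq hyx
                  simp only [Finset.mem_insert, Finset.mem_singleton] at hyq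
                  omega)
              (by omega) (by omega) (by omega)
          exact KG.mkInA' u s (by omega) (by omega) (by omega) (by omega)
            (by rw [KG.shiftprev_eq k u (by omega) (by omega)]; omega)
            (by omega)
            (by rw [KG.shift1_eq_s7 k u (by omega) (by omega)]; omega)
            (by rw [KG.shift1_eq_s7 k u (by omega) (by omega), hCσ]
                ext y; simp only [Finset.mem_insert, Finset.mem_singleton]; omega)
        · -- missing u : triple {s, s+1, u+1}
          have hCσ : KG.Csets k σ = {s, s + 1, u + 1} :=
            KG.csets_eq_triple hss hcard3 hxn
              (by intro y hyq hyx
                  simp only [Finset.mem_insert, Finset.mem_singleton] at hyq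
                  omega)
              (by omega) (by omega) (by omega)
          by_cases hsp : s = 1
          · subst hsp
            by_cases hup : u = k + 5
            · exact KG.mkInA' (k + 6) 2 (by omega) (by omega) (by omega) (by omega)
                (by rw [KG.shiftprev_eq k (k + 6) (by omega) (by omega)]; omega)
                (by omega)
                (by rw [KG.shift1_top k]; omega)
                (by rw [KG.shift1_top k, hCσ]
                    ext y; simp only [Finset.mem_insert, Finset.mem_singleton]; omega)
            · exact KG.mkInA' 1 (u + 1) (by omega) (by omega) (by omega) (by omega)
                (by rw [KG.shiftprev_one k]; omega)
                (by omega)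
                (by rw [KG.shift1_eq_s7 k 1 (by omega) (by omega)]; omega)
                (by rw [KG.shift1_eq_s7 k 1 (by omega) (by omega)]; exact hCσ)
          · exact KG.mkInA' s (u + 1) (by omega) (by omega) (by omega) (by omega)
              (by rw [KG.shiftprev_eq k s (by omega) (by omega)]; omega)
              (by omega)
              (by rw [hnext_s]; omega)
              (by rw [hnext_s]; exact hCσ)
        · -- missing u+1 : triple {s, s+1, u}
          have hCσ : KG.Csets k σ = {s, s + 1, u} :=
            KG.csets_eq_triple hss hcard3 hxn
              (by intro y hyq hyx
                  simp only [Finset.mem_insert, Finset.mem_singleton] at hyq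
                  omega)
              (by omega) (by omega) (by omega)
          by_cases hsp : s = 1
          · subst hsp
            exact KG.mkInA' 1 u (by omega) (by omega) (by omega) (by omega)
              (by rw [KG.shiftprev_one k]; omega)
              (by omega)
              (by rw [KG.shift1_eq_s7 k 1 (by omega) (by omega)]; omega)
              (by rw [KG.shift1_eq_s7 k 1 (by omega) (by omega)]; exact hCσ)
          · exact KG.mkInA' s u (by omega) (by omega) (by omega) (by omega)
              (by rw [KG.shiftprev_eq k s (by omega) (by omega)]; omega)
              (by omega)
              (by rw [hnext_s]; omega)
              (by rw [hnext_s]; exact hCσ)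
    · -- wrap case : u = k + 6, s ≥ 2
      have hs2 : 2 ≤ s := by
        by_contra h
        have := hu5 (by omega)
        omega
      have huk : u = k + 6 := by omega
      have hnext_u : KG.shiftElem k 1 u = 1 := by rw [huk]; exact KG.shift1_top k
      rw [hnext_u] at hC
      by_cases heq : KG.Csets k σ = KG.Csets k τ
      · right
        exact ⟨s, hsmem, u, humem, by rw [heq, hC, hnext_s, hnext_u]⟩
      · left
        have hss : KG.Csets k σ ⊆ {s, s + 1, u, 1} := hC ▸ hmono
        have hmiss : ∃ x ∈ ({s, s + 1, u, 1} : Finset ℕ), x ∉ KG.Csets k σ := by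
          by_contra hcon
          push_neg at hcon
          exact heq (by rw [hC]; exact Finset.Subset.antisymm hss (fun x hx => hcon x hx))
        obtain ⟨x, hxq, hxn⟩ := hmiss
        simp only [Finset.mem_insert, Finset.mem_singleton] at hxq
        rcases hxq with hxe | hxe | hxe | hxe <;> rw [hxe] at hxn
        · -- missing s : triple {s+1, u, 1}
          have hCσ : KG.Csets k σ = {s + 1, u, 1} :=
            KG.csets_eq_triple hss hcard3 hxn
              (by intro y hyq hyx
                  simp only [Finset.mem_insert, Finset.mem_singleton] at hyq
                  omega)
              (by omega) (by omega) (by omega)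
          by_cases hsp : s = k + 4
          · exact KG.mkInA' (k + 5) 1 (by omega) (by omega) (by omega) (by omega)
              (by rw [KG.shiftprev_eq k (k + 5) (by omega) (by omega)]; omega)
              (by omega)
              (by rw [KG.shift1_eq_s7 k (k + 5) (by omega) (by omega)]; omega)
              (by rw [KG.shift1_eq_s7 k (k + 5) (by omega) (by omega), hCσ]
                  ext y; simp only [Finset.mem_insert, Finset.mem_singleton]; omega)
          · exact KG.mkInA' u (s + 1) (by omega) (by omega) (by omega) (by omega)
              (by rw [KG.shiftprev_eq k u (by omega) (by omega)]; omega)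
              (by omega)
              (by rw [hnext_u]; omega)
              (by rw [hnext_u, hCσ]
                  ext y; simp only [Finset.mem_insert, Finset.mem_singleton]; omega)
        · -- missing s+1 : triple {s, u, 1}
          have hCσ : KG.Csets k σ = {s, u, 1} :=
            KG.csets_eq_triple hss hcard3 hxn
              (by intro y hyq hyx
                  simp only [Finset.mem_insert, Finset.mem_singleton] at hyq
                  omega)
              (by omega) (by omega) (by omega)
          exact KG.mkInA' u s (by omega) (by omega) (by omega) (by omega)
            (by rw [KG.shiftprev_eq k u (by omega) (by omega)]; omega)
            (by omega)
            (by rw [hnext_u]; omega)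
            (by rw [hnext_u, hCσ]
                ext y; simp only [Finset.mem_insert, Finset.mem_singleton]; omega)
        · -- missing u : triple {s, s+1, 1}
          have hCσ : KG.Csets k σ = {s, s + 1, 1} :=
            KG.csets_eq_triple hss hcard3 hxn
              (by intro y hyq hyx
                  simp only [Finset.mem_insert, Finset.mem_singleton] at hyq
                  omega)
              (by omega) (by omega) (by omega)
          by_cases hsp : s = 2
          · exact KG.mkInA' 1 3 (by omega) (by omega) (by omega) (by omega)
              (by rw [KG.shiftprev_one k]; omega)
              (by omega)
              (by rw [KG.shift1_eq_s7 k 1 (by omega) (by omega)]; omega)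
              (by rw [KG.shift1_eq_s7 k 1 (by omega) (by omega), hCσ]
                  ext y; simp only [Finset.mem_insert, Finset.mem_singleton]; omega)
          · exact KG.mkInA' s 1 (by omega) (by omega) (by omega) (by omega)
              (by rw [KG.shiftprev_eq k s (by omega) (by omega)]; omega)
              (by omega)
              (by rw [hnext_s]; omega)
              (by rw [hnext_s]; exact hCσ)
        · -- missing 1 : triple {s, s+1, u}
          have hCσ : KG.Csets k σ = {s, s + 1, u} :=
            KG.csets_eq_triple hss hcard3 hxn
              (by intro y hyq hyx
                  simp only [Finset.mem_insert, Finset.mem_singleton] at hyq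
                  omega)
              (by omega) (by omega) (by omega)
          exact KG.mkInA' s u (by omega) (by omega) (by omega) (by omega)
            (by rw [KG.shiftprev_eq k s (by omega) (by omega)]; omega)
            (by omega)
            (by rw [hnext_s]; omega)
            (by rw [hnext_s]; exact hCσ)
  · -- Part C
    rintro ⟨v, hv, hns⟩
    exact Or.inr (Or.inr ⟨v, hsub hv, hns⟩)
end

section
/- Every σ in P_3^k \ P_1^k (a simplex of N(KG_{3,k}) that is not a simplex of N(S_{3,k})) satisfies 3 ≤ |C_σ| ≤ 4; moreover if |C_σ| = 3 then C_σ = {i,i+1,j} for some i ∈ [k+6], j ∉ {i−1,i,i+1}, and if |C_σ| = 4 then C_σ = {i,i+1,j,j+1} for some i ∈ [k+4], j ∈ J_i (indices mod k+6). -/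
open Finset

namespace KG

variable {k : ℕ}

lemma succ_lt' (x : ℕ) (h1 : 1 ≤ x) (h2 : x < k + 6) : shiftElem k 1 x = x + 1 := by
  unfold shiftElem
  have hx : x - 1 + 1 = x := by omega
  rw [hx, Nat.mod_eq_of_lt h2]

lemma succ_top' : shiftElem k 1 (k + 6) = 1 := by
  unfold shiftElem
  have hx : k + 6 - 1 + 1 = k + 6 := by omega
  rw [hx, Nat.mod_self]

lemma pred_ge' (x : ℕ) (h1 : 2 ≤ x) (h2 : x ≤ k + 6) : shiftElem k (k + 5) x = x - 1 := by
  unfold shiftElem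
  have h3 : k + 6 ≤ x - 1 + (k + 5) := by omega
  rw [Nat.mod_eq_sub_mod h3]
  have h4 : x - 1 + (k + 5) - (k + 6) = x - 2 := by omega
  rw [h4, Nat.mod_eq_of_lt (by omega)]
  omega

lemma pred_one' : shiftElem k (k + 5) 1 = k + 6 := by
  unfold shiftElem
  rw [Nat.mod_eq_of_lt (by omega)]
  omega

lemma card3 {x y z : ℕ} (h1 : x < y) (h2 : y < z) : ({x, y, z} : Finset ℕ).card = 3 := by
  rw [card_insert_of_notMem (by simp; omega), card_insert_of_notMem (by simp; omega),
    card_singleton]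

lemma sorted3 {s : Finset ℕ} (h : s.card = 3) :
    ∃ a b c, a < b ∧ b < c ∧ s = {a, b, c} := by
  have hlen : (s.sort (· ≤ ·)).length = 3 := by rw [Finset.length_sort]; exact h
  have hs := s.sortedLT_sort.pairwise
  have hts := s.sort_toFinset (· ≤ ·)
  rcases hl : s.sort (· ≤ ·) with _ | ⟨a, _ | ⟨b, _ | ⟨c, _ | _⟩⟩⟩ <;>
    rw [hl] at hlen <;> simp at hlen
  rw [hl] at hs hts
  simp [List.pairwise_cons] at hs
  exact ⟨a, b, c, by omega, by omega, by rw [← hts]; simp⟩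

lemma sorted4 {s : Finset ℕ} (h : s.card = 4) :
    ∃ a b c d, a < b ∧ b < c ∧ c < d ∧ s = {a, b, c, d} := by
  have hlen : (s.sort (· ≤ ·)).length = 4 := by rw [Finset.length_sort]; exact h
  have hs := s.sortedLT_sort.pairwise
  have hts := s.sort_toFinset (· ≤ ·)
  rcases hl : s.sort (· ≤ ·) with _ | ⟨a, _ | ⟨b, _ | ⟨c, _ | ⟨d, _ | _⟩⟩⟩⟩ <;>
    rw [hl] at hlen <;> simp at hlen
  rw [hl] at hs hts
  simp [List.pairwise_cons] at hs
  exact ⟨a, b, c, d, by omega, by omega, by omega, by rw [← hts]; simp⟩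

lemma sorted5 {s : Finset ℕ} (h : s.card = 5) :
    ∃ a b c d e, a < b ∧ b < c ∧ c < d ∧ d < e ∧ s = {a, b, c, d, e} := by
  have hlen : (s.sort (· ≤ ·)).length = 5 := by rw [Finset.length_sort]; exact h
  have hs := s.sortedLT_sort.pairwise
  have hts := s.sort_toFinset (· ≤ ·)
  rcases hl : s.sort (· ≤ ·) with _ | ⟨a, _ | ⟨b, _ | ⟨c, _ | ⟨d, _ | ⟨e, _ | _⟩⟩⟩⟩⟩ <;>
    rw [hl] at hlen <;> simp at hlen
  rw [hl] at hs hts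
  simp [List.pairwise_cons] at hs
  exact ⟨a, b, c, d, e, by omega, by omega, by omega, by omega, by rw [← hts]; simp⟩

lemma stable_triple {x y z : ℕ} (hx : 1 ≤ x) (hxy : x + 1 < y) (hyz : y + 1 < z)
    (hz : z ≤ k + 6) (hw : z < k + 6 ∨ 1 < x) : Stable k ({x, y, z} : Finset ℕ) := by
  intro t ht
  simp only [mem_insert, mem_singleton] at ht ⊢
  rcases ht with rfl | rfl | rfl
  · rw [succ_lt' t hx (by omega)]; omega
  · rw [succ_lt' t (by omega) (by omega)]; omega
  · rcases eq_or_lt_of_le hz with rfl | hlt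
    · rw [succ_top']; omega
    · rw [succ_lt' t (by omega) hlt]; omega

lemma unstable_cases {x y z : ℕ} (hx : 1 ≤ x) (hxy : x < y) (hyz : y < z) (hz : z ≤ k + 6)
    (h : ∃ t ∈ ({x, y, z} : Finset ℕ), shiftElem k 1 t ∈ ({x, y, z} : Finset ℕ)) :
    y = x + 1 ∨ z = y + 1 ∨ (x = 1 ∧ z = k + 6) := by
  obtain ⟨t, ht, ht'⟩ := h
  simp only [mem_insert, mem_singleton] at ht ht'
  rcases ht with rfl | rfl | rfl
  · rw [succ_lt' t hx (by omega)] at ht'; omega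
  · rw [succ_lt' t (by omega) (by omega)] at ht'; omega
  · rcases eq_or_lt_of_le hz with rfl | hlt
    · rw [succ_top'] at ht'; omega
    · rw [succ_lt' t (by omega) hlt] at ht'; omega

lemma five_stable {S : Finset ℕ} (hS : S ⊆ Finset.Icc 1 (k + 6)) (h5 : S.card = 5) :
    ∃ T ⊆ S, T.card = 3 ∧ Stable k T := by
  obtain ⟨a, b, c, d, e, hab, hbc, hcd, hde, hSeq⟩ := sorted5 h5
  have ha : a ∈ S := by rw [hSeq]; simp
  have hb : b ∈ S := by rw [hSeq]; simp
  have hc : c ∈ S := by rw [hSeq]; simp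
  have hd : d ∈ S := by rw [hSeq]; simp
  have he : e ∈ S := by rw [hSeq]; simp
  have ha1 : 1 ≤ a := (Finset.mem_Icc.mp (hS ha)).1
  have hen : e ≤ k + 6 := (Finset.mem_Icc.mp (hS he)).2
  by_cases hw : a = 1 ∧ e = k + 6
  · obtain ⟨rfl, rfl⟩ := hw
    by_cases hd1 : d = k + 5
    · subst hd1
      by_cases hb2 : b = 2
      · subst hb2
        by_cases hc2 : c = 3
        · refine ⟨{1, 3, k + 5}, ?_, card3 (by omega) (by omega),
            stable_triple (by omega) (by omega) (by omega) (by omega) (by omega)⟩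
          intro m hm; simp only [mem_insert, mem_singleton] at hm
          rcases hm with rfl | rfl | rfl
          · exact ha
          · rw [← hc2]; exact hc
          · exact hd
        by_cases hc3 : c = k + 4
        · refine ⟨{2, c, k + 6}, ?_, card3 (by omega) (by omega),
            stable_triple (by omega) (by omega) (by omega) (by omega) (by omega)⟩
          intro m hm; simp only [mem_insert, mem_singleton] at hm
          rcases hm with rfl | rfl | rfl <;> assumption
        · refine ⟨{2, c, k + 5}, ?_, card3 (by omega) (by omega),
            stable_triple (by omega) (by omega) (by omega) (by omega) (by omega)⟩
          intro m hm; simp only [mem_insert, mem_singleton] at hm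
          rcases hm with rfl | rfl | rfl <;> assumption
      · refine ⟨{1, b, k + 5}, ?_, card3 (by omega) (by omega),
          stable_triple (by omega) (by omega) (by omega) (by omega) (by omega)⟩
        intro m hm; simp only [mem_insert, mem_singleton] at hm
        rcases hm with rfl | rfl | rfl <;> assumption
    · refine ⟨{b, d, k + 6}, ?_, card3 (by omega) (by omega),
        stable_triple (by omega) (by omega) (by omega) (by omega) (by omega)⟩
      intro m hm; simp only [mem_insert, mem_singleton] at hm
      rcases hm with rfl | rfl | rfl <;> assumption
  · refine ⟨{a, c, e}, ?_, card3 (by omega) (by omega),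
      stable_triple (by omega) (by omega) (by omega) (by omega) (by omega)⟩
    intro m hm; simp only [mem_insert, mem_singleton] at hm
    rcases hm with rfl | rfl | rfl <;> assumption

end KG
/-- if `σ` is a simplex of `N(KG_{3,k})` but not of `N(S_{3,k})`, then
`3 ≤ |C_σ| ≤ 4`; if `|C_σ| = 3` then `C_σ = {i, i+1, j}` with `i ∈ [k+6]`,
`j ∉ {i-1, i, i+1}` (mod `k+6`), and if `|C_σ| = 4` then `C_σ = {i, i+1, j, j+1}` with
`i ∈ [k+4]`, `j ∈ J_i`. -/
theorem stmt_17 (k : ℕ) (σ : Finset (Finset ℕ))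
    (h3 : KG.SimplexKG k σ) (h1 : ¬ KG.SimplexS k σ) :
    (3 ≤ (KG.Csets k σ).card ∧ (KG.Csets k σ).card ≤ 4) ∧
    ((KG.Csets k σ).card = 3 →
      ∃ i ∈ KG.ground k, ∃ j ∈ KG.ground k,
        j ≠ KG.shiftElem k (k + 5) i ∧ j ≠ i ∧ j ≠ KG.shiftElem k 1 i ∧
        KG.Csets k σ = {i, KG.shiftElem k 1 i, j}) ∧
    ((KG.Csets k σ).card = 4 →
      ∃ i ∈ Finset.Icc 1 (k + 4), ∃ j ∈ KG.Jset k i,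
        KG.Csets k σ = {i, KG.shiftElem k 1 i, j, KG.shiftElem k 1 j}) := by
  classical
  obtain ⟨hne, u, hu⟩ := h3
  obtain ⟨v0, hv0⟩ := hne
  set C := KG.Csets k σ with hCdef
  have hCg : C ⊆ KG.ground k := Finset.sdiff_subset
  have hbd : ∀ x ∈ C, 1 ≤ x ∧ x ≤ k + 6 := fun x hx => Finset.mem_Icc.mp (hCg hx)
  have hvert : ∀ v ∈ σ, KG.IsVertex k v := fun v hv => (hu v hv).2.1
  have huC : u ⊆ C := by
    intro x hx
    rw [hCdef, KG.Csets, Finset.mem_sdiff]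
    refine ⟨(hu v0 hv0).1.1 hx, ?_⟩
    rw [Finset.mem_sup]
    rintro ⟨v, hv, hxv⟩
    exact Finset.disjoint_left.mp (hu v hv).2.2 hx hxv
  have H : ∀ w : Finset ℕ, w ⊆ C → w.card = 3 →
      ∃ t ∈ w, KG.shiftElem k 1 t ∈ w := by
    intro w hwC hw3
    by_contra hcon
    push_neg at hcon
    apply h1
    refine ⟨⟨v0, hv0⟩, w, fun v hv => ⟨⟨⟨hwC.trans hCg, hw3⟩, hvert v hv, ?_⟩, Or.inl hcon⟩⟩
    rw [Finset.disjoint_left]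
    intro x hxw hxv
    have hxC := hwC hxw
    rw [hCdef, KG.Csets, Finset.mem_sdiff] at hxC
    exact hxC.2 (Finset.mem_sup.mpr ⟨v, hv, hxv⟩)
  have h3le : 3 ≤ C.card := by
    have := Finset.card_le_card huC
    rw [(hu v0 hv0).1.2] at this
    exact this
  have h4ge : C.card ≤ 4 := by
    by_contra hgt
    obtain ⟨S, hSC, hS5⟩ := Finset.exists_subset_card_eq (s := C) (n := 5) (by omega)
    obtain ⟨T, hTS, hT3, hTst⟩ := KG.five_stable (fun x hx => hCg (hSC hx)) hS5
    obtain ⟨t, ht, ht'⟩ := H T (hTS.trans hSC) hT3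
    exact hTst t ht ht'
  refine ⟨⟨h3le, h4ge⟩, ?_, ?_⟩
  · -- card = 3
    intro hc3
    obtain ⟨a, b, c, hab, hbc, hC3⟩ := KG.sorted3 hc3
    have ha : a ∈ C := by rw [hC3]; simp
    have hcm : c ∈ C := by rw [hC3]; simp
    have ha1 : 1 ≤ a := (hbd a ha).1
    have hcn : c ≤ k + 6 := (hbd c hcm).2
    have F := KG.unstable_cases ha1 hab hbc hcn (by rw [← hC3]; exact H C (le_refl _) hc3)
    by_cases h1b : b = a + 1
    · by_cases hwrap : a = 1 ∧ c = k + 6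
      · -- C = {1, 2, k+6}; take i = k+6, j = 2
        refine ⟨k + 6, by simp only [KG.ground, Finset.mem_Icc]; omega, 2, by simp only [KG.ground, Finset.mem_Icc]; omega, ?_, by omega, ?_, ?_⟩
        · rw [KG.pred_ge' (k + 6) (by omega) (by omega)]; omega
        · rw [KG.succ_top']; omega
        · rw [KG.succ_top', hC3]
          ext m
          simp only [Finset.mem_insert, Finset.mem_singleton]
          omega
      · -- i = a, j = c
        refine ⟨a, by simp only [KG.ground, Finset.mem_Icc]; omega, c, by simp only [KG.ground, Finset.mem_Icc]; omega, ?_, by omega, ?_, ?_⟩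
        · by_cases hA : a = 1
          · rw [hA, KG.pred_one']; omega
          · rw [KG.pred_ge' a (by omega) (by omega)]; omega
        · rw [KG.succ_lt' a ha1 (by omega)]; omega
        · rw [KG.succ_lt' a ha1 (by omega), hC3]
          ext m
          simp only [Finset.mem_insert, Finset.mem_singleton]
          omega
    · by_cases h1c : c = b + 1
      · -- i = b, j = a
        refine ⟨b, by simp only [KG.ground, Finset.mem_Icc]; omega, a, by simp only [KG.ground, Finset.mem_Icc]; omega, ?_, by omega, ?_, ?_⟩
        · rw [KG.pred_ge' b (by omega) (by omega)]; omega
        · rw [KG.succ_lt' b (by omega) (by omega)]; omega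
        · rw [KG.succ_lt' b (by omega) (by omega), hC3]
          ext m
          simp only [Finset.mem_insert, Finset.mem_singleton]
          omega
      · -- a = 1, c = k+6, i = k+6, j = b
        have hw : a = 1 ∧ c = k + 6 := by omega
        refine ⟨k + 6, by simp only [KG.ground, Finset.mem_Icc]; omega, b, by simp only [KG.ground, Finset.mem_Icc]; omega, ?_, by omega, ?_, ?_⟩
        · rw [KG.pred_ge' (k + 6) (by omega) (by omega)]; omega
        · rw [KG.succ_top']; omega
        · rw [KG.succ_top', hC3]
          ext m
          simp only [Finset.mem_insert, Finset.mem_singleton]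
          omega
  · -- card = 4
    intro hc4
    obtain ⟨a, b, c, d, hab, hbc, hcd, hC4⟩ := KG.sorted4 hc4
    have ha : a ∈ C := by rw [hC4]; simp
    have hdm : d ∈ C := by rw [hC4]; simp
    have ha1 : 1 ≤ a := (hbd a ha).1
    have hdn : d ≤ k + 6 := (hbd d hdm).2
    have hsub : ∀ x y z : ℕ, x ∈ C → y ∈ C → z ∈ C → ({x, y, z} : Finset ℕ) ⊆ C := by
      intro x y z hx hy hz m hm
      simp only [Finset.mem_insert, Finset.mem_singleton] at hm
      rcases hm with rfl | rfl | rfl <;> assumption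
    have hb : b ∈ C := by rw [hC4]; simp
    have hcm : c ∈ C := by rw [hC4]; simp
    have F1 := KG.unstable_cases ha1 hab hbc (by omega)
      (H _ (hsub a b c ha hb hcm) (KG.card3 hab hbc))
    have F2 := KG.unstable_cases ha1 hab (by omega) hdn
      (H _ (hsub a b d ha hb hdm) (KG.card3 hab (by omega)))
    have F3 := KG.unstable_cases ha1 (by omega) hcd hdn
      (H _ (hsub a c d ha hcm hdm) (KG.card3 (by omega) hcd))
    have F4 := KG.unstable_cases (by omega) hbc hcd hdn
      (H _ (hsub b c d hb hcm hdm) (KG.card3 hbc hcd))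
    have key : (b = a + 1 ∧ d = c + 1) ∨ (a = 1 ∧ d = k + 6 ∧ c = b + 1) := by omega
    rcases key with ⟨hA, hB⟩ | ⟨hA, hB, hC⟩
    · -- i = a, j = c
      refine ⟨a, Finset.mem_Icc.mpr ⟨ha1, by omega⟩, c, ?_, ?_⟩
      · unfold KG.Jset
        by_cases hA1 : a = 1
        · rw [if_pos hA1, Finset.mem_Icc]; omega
        · rw [if_neg hA1, if_pos (by constructor <;> omega), Finset.mem_Icc]; omega
      · rw [KG.succ_lt' a ha1 (by omega), KG.succ_lt' c (by omega) (by omega), hC4]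
        ext m
        simp only [Finset.mem_insert, Finset.mem_singleton]
        omega
    · -- i = b, j = k + 6
      refine ⟨b, Finset.mem_Icc.mpr ⟨by omega, by omega⟩, k + 6, ?_, ?_⟩
      · unfold KG.Jset
        rw [if_neg (by omega), if_pos (by constructor <;> omega), Finset.mem_Icc]
        omega
      · rw [KG.succ_lt' b (by omega) (by omega), KG.succ_top', hC4]
        ext m
        simp only [Finset.mem_insert, Finset.mem_singleton]
        omega
end
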